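/- Let H be a Hermitian N×N matrix and v a unit vector. The orthogonal complement of the dark subspace relative to v equals the span of the orthogonal projections of v onto the eigenspaces of H; equivalently, ℂ^N decomposes orthogonally as the dark subspace plus the cyclic subspace generated by v under H (the span of {H^k v : k ≥ 0}). -/

import Mathlib

/-! A subspace invariant under a symmetric operator `T` is spanned by the eigenvectors it contains,
and its orthogonal complement is again invariant. So if `W` is `T`-invariant, orthogonal to the
dark subspace, and every eigenvector in `Wᗮ` is orthogonal to `v`, then `Wᗮ` is spanned by dark
eigenvectors, the dark subspace is exactly `Wᗮ`, and its complement is `W`. The Krylov space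
qualifies because it contains `v` and `⟪T^k v, x⟫ = μ^k ⟪v, x⟫` for an eigenvector `x`; the span of
the eigenprojections `P_μ v` qualifies because `⟪P_μ v, x⟫ = ⟪v, x⟫` on the `μ`-eigenspace and
vanishes on the others. -/

open scoped InnerProductSpace

/-- The dark subspace of a Hermitian matrix `H` relative to a target vector `v`:
the span of the eigenvectors of `H` orthogonal to `v`. -/
noncomputable def darkSubspace {N : ℕ} (H : Matrix (Fin N) (Fin N) ℂ)
    (v : EuclideanSpace ℂ (Fin N)) : Submodule ℂ (EuclideanSpace ℂ (Fin N)) :=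
  Submodule.span ℂ
    {x | x ≠ 0 ∧ (∃ μ : ℂ, Matrix.toEuclideanLin H x = μ • x) ∧ ⟪v, x⟫_ℂ = 0}

open Module.End Submodule

variable {𝕜 E : Type*} [RCLike 𝕜] [NormedAddCommGroup E] [InnerProductSpace 𝕜 E]

namespace LinearMap

noncomputable def darkSubspace (T : E →ₗ[𝕜] E) (v : E) : Submodule 𝕜 E :=
  span 𝕜 {x | x ≠ 0 ∧ (∃ μ : 𝕜, T x = μ • x) ∧ ⟪v, x⟫_𝕜 = 0}

noncomputable def krylovSubspace (T : E →ₗ[𝕜] E) (v : E) : Submodule 𝕜 E :=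
  span 𝕜 (Set.range fun k : ℕ => (T ^ k) v)

namespace IsSymmetric

variable {T : E →ₗ[𝕜] E}

theorem orthogonal_invariant (hT : T.IsSymmetric) {W : Submodule 𝕜 E}
    (hW : ∀ x ∈ W, T x ∈ W) : ∀ x ∈ Wᗮ, T x ∈ Wᗮ := fun x hx w hw => by
  rw [← hT w x]
  exact hx _ (hW w hw)

variable [FiniteDimensional 𝕜 E]

theorem starProjection_eigenspace_apply (hT : T.IsSymmetric) {μ : 𝕜} {x : E}
    (hx : T x = μ • x) (ν : 𝕜) :
    (eigenspace T ν).starProjection x = if μ = ν then x else 0 := by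
  split_ifs with hμν
  · subst hμν
    exact starProjection_eq_self_iff.mpr (mem_eigenspace_iff.mpr hx)
  · refine (starProjection_apply_eq_zero_iff _).mpr fun y hy => ?_
    exact hT.orthogonalFamily_eigenspaces (Ne.symm hμν) ⟨y, hy⟩ ⟨x, mem_eigenspace_iff.mpr hx⟩

theorem le_span_eigenvectors_of_invariant (hT : T.IsSymmetric) {U : Submodule 𝕜 E}
    (hU : ∀ x ∈ U, T x ∈ U) : U ≤ span 𝕜 {x | x ∈ U ∧ ∃ μ : 𝕜, T x = μ • x} := by
  have hspan : (⨆ μ, eigenspace (T.restrict hU) μ) = ⊤ :=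
    orthogonal_eq_bot_iff.mp (hT.restrict_invariant hU).orthogonalComplement_iSup_eigenspaces_eq_bot
  calc U = (⊤ : Submodule 𝕜 U).map U.subtype := U.map_subtype_top.symm
    _ = ⨆ μ, (eigenspace (T.restrict hU) μ).map U.subtype := by rw [← hspan, Submodule.map_iSup]
    _ ≤ _ := iSup_le fun μ => ?_
  rintro _ ⟨y, hy, rfl⟩
  exact subset_span ⟨y.2, μ, congr_arg Subtype.val (mem_eigenspace_iff.mp hy)⟩

variable {v : E}

theorem le_darkSubspace_of_invariant (hT : T.IsSymmetric) {U : Submodule 𝕜 E}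
    (hU : ∀ x ∈ U, T x ∈ U) (hv : ∀ x ∈ U, ∀ μ : 𝕜, T x = μ • x → ⟪v, x⟫_𝕜 = 0) :
    U ≤ T.darkSubspace v := by
  refine (hT.le_span_eigenvectors_of_invariant hU).trans (span_le.mpr ?_)
  rintro x ⟨hxU, μ, hx⟩
  by_cases hx0 : x = 0
  · simp only [hx0, SetLike.mem_coe, zero_mem]
  · exact subset_span ⟨hx0, ⟨μ, hx⟩, hv x hxU μ hx⟩

theorem orthogonal_darkSubspace_eq (hT : T.IsSymmetric) {W : Submodule 𝕜 E}
    (hW : ∀ x ∈ W, T x ∈ W) (hortho : W ⟂ T.darkSubspace v)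
    (hv : ∀ x ∈ Wᗮ, ∀ μ : 𝕜, T x = μ • x → ⟪v, x⟫_𝕜 = 0) :
    (T.darkSubspace v)ᗮ = W := by
  have hdark : T.darkSubspace v = Wᗮ :=
    le_antisymm (isOrtho_iff_le.mp hortho.symm)
      (hT.le_darkSubspace_of_invariant (hT.orthogonal_invariant hW) hv)
  rw [hdark, orthogonal_orthogonal]

end IsSymmetric

section Krylov

variable {T : E →ₗ[𝕜] E} {v : E}

theorem krylovSubspace_invariant : ∀ x ∈ T.krylovSubspace v, T x ∈ T.krylovSubspace v := by
  have : T.krylovSubspace v ≤ (T.krylovSubspace v).comap T := span_le.mpr <| by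
    rintro _ ⟨k, rfl⟩
    exact subset_span ⟨k + 1, by simp only [pow_succ', mul_apply]⟩
  exact fun x hx => this hx

theorem mem_krylovSubspace_self : v ∈ T.krylovSubspace v :=
  subset_span ⟨0, by simp only [pow_zero, one_apply]⟩

theorem IsSymmetric.krylovSubspace_isOrtho_darkSubspace (hT : T.IsSymmetric) :
    T.krylovSubspace v ⟂ T.darkSubspace v := by
  rw [krylovSubspace, darkSubspace, isOrtho_span]
  rintro _ ⟨k, rfl⟩ x ⟨hx0, ⟨μ, hx⟩, hvx⟩
  rw [hT.pow k v x, HasEigenvector.pow_apply ⟨mem_eigenspace_iff.mpr hx, hx0⟩, inner_smul_right,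
    hvx, mul_zero]

theorem IsSymmetric.orthogonal_darkSubspace_eq_krylovSubspace [FiniteDimensional 𝕜 E]
    (hT : T.IsSymmetric) : (T.darkSubspace v)ᗮ = T.krylovSubspace v :=
  hT.orthogonal_darkSubspace_eq krylovSubspace_invariant hT.krylovSubspace_isOrtho_darkSubspace
    fun _ hx _ _ => inner_right_of_mem_orthogonal mem_krylovSubspace_self hx

end Krylov

section Eigenprojection

variable {T : E →ₗ[𝕜] E} {v : E} [FiniteDimensional 𝕜 E]

noncomputable def eigenprojectionSpan (T : E →ₗ[𝕜] E) (v : E) : Submodule 𝕜 E :=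
  span 𝕜 (Set.range fun μ : 𝕜 => (eigenspace T μ).starProjection v)

theorem IsSymmetric.inner_starProjection_eigenspace (hT : T.IsSymmetric) {μ : 𝕜} {x : E}
    (hx : T x = μ • x) (ν : 𝕜) (v : E) :
    ⟪(eigenspace T ν).starProjection v, x⟫_𝕜 = if μ = ν then ⟪v, x⟫_𝕜 else 0 := by
  rw [inner_starProjection_left_eq_right, hT.starProjection_eigenspace_apply hx]
  split_ifs
  · rfl
  · exact inner_zero_right v

theorem eigenprojectionSpan_invariant :
    ∀ x ∈ T.eigenprojectionSpan v, T x ∈ T.eigenprojectionSpan v := by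
  have : T.eigenprojectionSpan v ≤ (T.eigenprojectionSpan v).comap T := span_le.mpr <| by
    rintro _ ⟨μ, rfl⟩
    rw [SetLike.mem_coe, mem_comap, mem_eigenspace_iff.mp (starProjection_apply_mem _ v)]
    exact smul_mem _ μ (subset_span ⟨μ, rfl⟩)
  exact fun x hx => this hx

theorem IsSymmetric.eigenprojectionSpan_isOrtho_darkSubspace (hT : T.IsSymmetric) :
    T.eigenprojectionSpan v ⟂ T.darkSubspace v := by
  rw [eigenprojectionSpan, darkSubspace, isOrtho_span]
  rintro _ ⟨ν, rfl⟩ x ⟨-, ⟨μ, hx⟩, hvx⟩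
  rw [hT.inner_starProjection_eigenspace hx, hvx, ite_self]

theorem IsSymmetric.orthogonal_darkSubspace_eq_eigenprojectionSpan (hT : T.IsSymmetric) :
    (T.darkSubspace v)ᗮ = T.eigenprojectionSpan v := by
  refine hT.orthogonal_darkSubspace_eq eigenprojectionSpan_invariant
    hT.eigenprojectionSpan_isOrtho_darkSubspace fun x hx μ hμx => ?_
  calc ⟪v, x⟫_𝕜 = ⟪(eigenspace T μ).starProjection v, x⟫_𝕜 := by
        rw [hT.inner_starProjection_eigenspace hμx, if_pos rfl]
    _ = 0 := inner_right_of_mem_orthogonal (subset_span ⟨μ, rfl⟩ : _ ∈ T.eigenprojectionSpan v) hx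

end Eigenprojection

end LinearMap

theorem Matrix.toEuclideanLin_pow {n : Type*} [Fintype n] [DecidableEq n] (A : Matrix n n 𝕜)
    (k : ℕ) : toEuclideanLin (A ^ k) = toEuclideanLin A ^ k := by
  rw [← coe_toEuclideanCLM_eq_toEuclideanLin, map_pow, ContinuousLinearMap.toLinearMap_pow]
  rfl

theorem dark_complement_eq_projections_eq_krylov_general
    (N : ℕ) (H : Matrix (Fin N) (Fin N) ℂ) (hH : H.IsHermitian)
    (v : EuclideanSpace ℂ (Fin N)) :
    (darkSubspace H v)ᗮ =
      Submodule.span ℂ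
        (Set.range fun μ : ℂ =>
          ((Submodule.orthogonalProjection
            (Module.End.eigenspace (Matrix.toEuclideanLin H) μ) v :
              EuclideanSpace ℂ (Fin N)))) ∧
    (darkSubspace H v)ᗮ =
      Submodule.span ℂ
        (Set.range fun k : ℕ =>
          (Matrix.toEuclideanLin (H ^ k) v : EuclideanSpace ℂ (Fin N))) := by
  have hT : (Matrix.toEuclideanLin H).IsSymmetric := Matrix.isSymmetric_toEuclideanLin_iff.mpr hH
  have hdark : darkSubspace H v = (Matrix.toEuclideanLin H).darkSubspace v := rfl
  simp only [← starProjection_apply, Matrix.toEuclideanLin_pow, hdark]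
  exact ⟨hT.orthogonal_darkSubspace_eq_eigenprojectionSpan,
    hT.orthogonal_darkSubspace_eq_krylovSubspace⟩

theorem dark_complement_eq_projections_eq_krylov
    (N : ℕ) (H : Matrix (Fin N) (Fin N) ℂ) (hH : H.IsHermitian)
    (v : EuclideanSpace ℂ (Fin N)) (hv : ‖v‖ = 1) :
    (darkSubspace H v)ᗮ =
      Submodule.span ℂ
        (Set.range fun μ : ℂ =>
          ((Submodule.orthogonalProjection
            (Module.End.eigenspace (Matrix.toEuclideanLin H) μ) v :
              EuclideanSpace ℂ (Fin N)))) ∧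
    (darkSubspace H v)ᗮ =
      Submodule.span ℂ
        (Set.range fun k : ℕ =>
          (Matrix.toEuclideanLin (H ^ k) v : EuclideanSpace ℂ (Fin N))) :=
  dark_complement_eq_projections_eq_krylov_general N H hH v
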